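/- arXiv:1609.00838 — 4 statements merged into one kernel-verified Lean document; each statement's English description precedes it below -/
import Mathlib

section
/- Let γ ∈ (0,1) and set ρ = e^{-2(1-γ)}. Then for all x ∈ (0,1), x/(x + (1-x)γ) ≥ (1 - ρ^x)/(1 - ρ). -/
/-!
With `s = 1 - γ`, clearing denominators turns the inequality into `g x ≤ x * g 1` for
`g y = (1 - exp (-2 s y)) * (1 - s + s y)`, which vanishes at `0`. This is the chord inequality
for `g` on `[0, 1]`: there `g'' y = 4 s³ exp (-2 s y) (1 - y) ≥ 0`, so `g` is convex.
-/

open Real Set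

noncomputable def moranFun (s y : ℝ) : ℝ := (1 - exp (-2 * s * y)) * (1 - s + s * y)

noncomputable def moranFunDeriv (s y : ℝ) : ℝ :=
  2 * s * exp (-2 * s * y) * (1 - s + s * y) + s * (1 - exp (-2 * s * y))

theorem hasDerivAt_exp_neg_two_mul (s y : ℝ) :
    HasDerivAt (fun y => exp (-2 * s * y)) (-2 * s * exp (-2 * s * y)) y := by
  simpa [mul_comm] using ((hasDerivAt_id y).const_mul (-2 * s)).exp

theorem hasDerivAt_moranFun (s y : ℝ) : HasDerivAt (moranFun s) (moranFunDeriv s y) y := by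
  have h := ((hasDerivAt_exp_neg_two_mul s y).const_sub 1).mul
    (((hasDerivAt_id y).const_mul s).const_add (1 - s))
  exact h.congr_deriv (by simp only [moranFunDeriv, id]; ring)

theorem hasDerivAt_moranFunDeriv (s y : ℝ) :
    HasDerivAt (moranFunDeriv s) (4 * s ^ 3 * exp (-2 * s * y) * (1 - y)) y := by
  have hE := hasDerivAt_exp_neg_two_mul s y
  have h := ((hE.const_mul (2 * s)).mul (((hasDerivAt_id y).const_mul s).const_add (1 - s))).add
    ((hE.const_sub 1).const_mul s)
  exact h.congr_deriv (by simp only [id]; ring)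

theorem convexOn_moranFun {s : ℝ} (hs : 0 ≤ s) : ConvexOn ℝ (Icc 0 1) (moranFun s) := by
  refine convexOn_of_hasDerivWithinAt2_nonneg (convex_Icc 0 1)
    (fun y _ => (hasDerivAt_moranFun s y).continuousAt.continuousWithinAt)
    (fun y _ => (hasDerivAt_moranFun s y).hasDerivWithinAt)
    (fun y _ => (hasDerivAt_moranFunDeriv s y).hasDerivWithinAt) fun y hy => ?_
  rw [interior_Icc] at hy
  have : 0 ≤ 1 - y := by linarith [hy.2]
  positivity

theorem moranFun_le {s x : ℝ} (hs : 0 ≤ s) (hx0 : 0 ≤ x) (hx1 : x ≤ 1) :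
    moranFun s x ≤ x * (1 - exp (-2 * s)) := by
  have h := (convexOn_moranFun hs).2 (left_mem_Icc.2 zero_le_one) (right_mem_Icc.2 zero_le_one)
    (sub_nonneg.2 hx1) hx0 (sub_add_cancel 1 x)
  simpa [moranFun] using h

theorem stmt_3 (γ : ℝ) (hγ0 : 0 < γ) (hγ1 : γ < 1) (x : ℝ) (hx0 : 0 < x) (hx1 : x < 1) :
    (1 - Real.exp (-2 * (1 - γ)) ^ x) / (1 - Real.exp (-2 * (1 - γ))) ≤
      x / (x + (1 - x) * γ) := by
  have hρ : 0 < 1 - exp (-2 * (1 - γ)) := sub_pos.2 (exp_lt_one_iff.2 (by linarith))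
  have hden : 0 < x + (1 - x) * γ := by nlinarith
  have hchord := moranFun_le (s := 1 - γ) (by linarith) hx0.le hx1.le
  rw [← exp_mul, div_le_div_iff₀ hρ hden]
  simp only [moranFun] at hchord
  calc (1 - exp (-2 * (1 - γ) * x)) * (x + (1 - x) * γ)
      = (1 - exp (-2 * (1 - γ) * x)) * (1 - (1 - γ) + (1 - γ) * x) := by ring
    _ ≤ x * (1 - exp (-2 * (1 - γ))) := hchord
end

section
/- Let α ∈ (0,1) and set θ = e^{-2(1-α)/α}. Then for all x ∈ (0,1), x/(x + (1-x)α) ≤ (1 - θ^x)/(1 - θ). -/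
/-!
With `c = 2(1 - α)/α`, the function `u y = (1 - e^{-cy}) (α + (1 - α) y)` has
`u'' y = c e^{-cy} (2(1 - α) - c(α + (1 - α) y)) = -c² (1 - α) y e^{-cy} ≤ 0` on `y ≥ 0`.
So `u` is concave and lies above its chord on `[0, 1]`: `u x ≥ x u 1 = x (1 - e^{-c})`,
which is the claim after clearing denominators.
-/

open Real Set

section ExpAffineProduct

variable (a b c : ℝ)

theorem hasDerivAt_one_sub_exp_mul_affine (y : ℝ) :
    HasDerivAt (fun y => (1 - exp (-c * y)) * (a + b * y))
      (c * exp (-c * y) * (a + b * y) + (1 - exp (-c * y)) * b) y := by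
  have hexp : HasDerivAt (fun y => 1 - exp (-c * y)) (c * exp (-c * y)) y := by
    simpa [mul_comm] using ((hasDerivAt_const_mul (-c)).exp.const_sub 1 : HasDerivAt _ _ y)
  have haff : HasDerivAt (fun y => a + b * y) b y := by
    simpa using ((hasDerivAt_id y).const_mul b).const_add a
  exact hexp.mul haff

theorem hasDerivAt_deriv_one_sub_exp_mul_affine (y : ℝ) :
    HasDerivAt (fun y => c * exp (-c * y) * (a + b * y) + (1 - exp (-c * y)) * b)
      (c * exp (-c * y) * (2 * b - c * (a + b * y))) y := by
  have hexp : HasDerivAt (fun y => exp (-c * y)) (exp (-c * y) * -c) y :=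
    (hasDerivAt_const_mul (-c)).exp
  have haff : HasDerivAt (fun y => a + b * y) b y := by
    simpa using ((hasDerivAt_id y).const_mul b).const_add a
  exact (((hexp.const_mul c).mul haff).add ((hexp.const_sub 1).mul_const b)).congr_deriv
    (by ring)

theorem concaveOn_one_sub_exp_mul_affine {a b c : ℝ} (hb : 0 ≤ b) (hc : 0 ≤ c)
    (hbc : 2 * b ≤ c * a) :
    ConcaveOn ℝ (Ici 0) (fun y => (1 - exp (-c * y)) * (a + b * y)) := by
  refine concaveOn_of_hasDerivWithinAt2_nonpos (convex_Ici 0)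
    (fun y _ => (hasDerivAt_one_sub_exp_mul_affine a b c y).continuousAt.continuousWithinAt)
    (fun y _ => (hasDerivAt_one_sub_exp_mul_affine a b c y).hasDerivWithinAt)
    (fun y _ => (hasDerivAt_deriv_one_sub_exp_mul_affine a b c y).hasDerivWithinAt) ?_
  intro y hy
  rw [interior_Ici] at hy
  have hfactor : 2 * b - c * (a + b * y) ≤ 0 := by nlinarith [mul_nonneg hc hb, mem_Ioi.1 hy]
  exact mul_nonpos_of_nonneg_of_nonpos (by positivity) hfactor

theorem mul_one_sub_exp_le_one_sub_exp_mul_affine {a b c x : ℝ} (hb : 0 ≤ b) (hc : 0 ≤ c)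
    (hbc : 2 * b ≤ c * a) (hx0 : 0 ≤ x) (hx1 : x ≤ 1) :
    x * ((1 - exp (-c)) * (a + b)) ≤ (1 - exp (-c * x)) * (a + b * x) := by
  have hchord := (concaveOn_one_sub_exp_mul_affine hb hc hbc).2 (mem_Ici.2 le_rfl)
    (mem_Ici.2 zero_le_one) (sub_nonneg.2 hx1) hx0 (by ring)
  simpa using hchord

end ExpAffineProduct

theorem stmt_4 (α : ℝ) (hα0 : 0 < α) (hα1 : α < 1) (x : ℝ) (hx0 : 0 < x) (hx1 : x < 1) :
    x / (x + (1 - x) * α) ≤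
      (1 - Real.exp (-2 * (1 - α) / α) ^ x) / (1 - Real.exp (-2 * (1 - α) / α)) := by
  set c := 2 * (1 - α) / α
  have hc : 0 < c := by positivity
  have hcα : c * α = 2 * (1 - α) := div_mul_cancel₀ _ hα0.ne'
  have hexp : -2 * (1 - α) / α = -c := by ring
  rw [hexp, ← exp_mul]
  have hchord := mul_one_sub_exp_le_one_sub_exp_mul_affine (a := α) (b := 1 - α)
    (sub_nonneg.2 hα1.le) hc.le hcα.ge hx0.le hx1.le
  have hden : 0 < 1 - exp (-c) := sub_pos.2 (Real.exp_lt_one_iff.2 (neg_lt_zero.2 hc))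
  rw [div_le_div_iff₀ (by nlinarith) hden]
  linarith [show x + (1 - x) * α = α + (1 - α) * x by ring,
    show α + (1 - α) = (1 : ℝ) by ring]
end

section
/- Fix constants a > c > 0, b > d > 0 and w ∈ (0,1]. For N ≥ 2 and 1 ≤ i ≤ N-1 define f_N(i) = 1 - w + w(a(i-1) + b(N-i))/(N-1) and g_N(i) = 1 - w + w(ci + d(N-i-1))/(N-1), and ξ_N(i) = i·f_N(i) / (i·f_N(i) + (N-i)·g_N(i)). Then for all N sufficiently large (so that f_N(i) > g_N(i) > 0 on {1,...,N-1}) and all 1 ≤ i ≤ N-2, ξ_N(i) < ξ_N(i+1). -/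
/-- Fitness of strategy A in the Imhof–Nowak Wright–Fisher model. -/
noncomputable def fN (a b w : ℝ) (N i : ℕ) : ℝ :=
  1 - w + w * (a * ((i : ℝ) - 1) + b * ((N : ℝ) - (i : ℝ))) / ((N : ℝ) - 1)

/-- Fitness of strategy B in the Imhof–Nowak Wright–Fisher model. -/
noncomputable def gN (c d w : ℝ) (N i : ℕ) : ℝ :=
  1 - w + w * (c * (i : ℝ) + d * ((N : ℝ) - (i : ℝ) - 1)) / ((N : ℝ) - 1)

/-- Conditional expected frequency of strategy A. -/
noncomputable def xiN (a b c d w : ℝ) (N i : ℕ) : ℝ :=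
  (i : ℝ) * fN a b w N i / ((i : ℝ) * fN a b w N i + ((N : ℝ) - (i : ℝ)) * gN c d w N i)

/-- Key polynomial inequality. -/
lemma key_ineq (a b c d u w x y : ℝ) (hu : 0 ≤ u) (hw : 0 < w)
    (ha : 0 < a) (hb : 0 < b) (hc : 0 < c) (hd : 0 < d)
    (hx : 1 ≤ x) (hy : 1 ≤ y) :
    x * y * (u*(x+y) + w*(a*(x-1)+b*(y+1))) * (u*(x+y) + w*(c*(x+1)+d*(y-1)))
      < (x+1) * (y+1) * (u*(x+y) + w*(a*x+b*y)) * (u*(x+y) + w*(c*x+d*y)) := by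
  have hx0 : 0 < x := by linarith
  have hy0 : 0 < y := by linarith
  have hP1 : 0 < a*(x*x) + 2*(a*(x*y)) + c*(x*x) + 2*(d*(x*y)) + d*(y*y) + b*(y*y)
      + a*x + c*x + b*y + d*y := by
    nlinarith [mul_pos ha (mul_pos hx0 hx0), mul_pos ha (mul_pos hx0 hy0),
      mul_pos hc (mul_pos hx0 hx0), mul_pos hd (mul_pos hx0 hy0),
      mul_pos hd (mul_pos hy0 hy0), mul_pos hb (mul_pos hy0 hy0),
      mul_pos ha hx0, mul_pos hc hx0, mul_pos hb hy0, mul_pos hd hy0]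
  have hP2 : 0 < a*c*(x*x) + 2*(a*d*(x*y)) + b*d*(y*y) + a*c*x + b*d*y := by
    nlinarith [mul_pos (mul_pos ha hc) (mul_pos hx0 hx0),
      mul_pos (mul_pos ha hd) (mul_pos hx0 hy0),
      mul_pos (mul_pos hb hd) (mul_pos hy0 hy0),
      mul_pos (mul_pos ha hc) hx0, mul_pos (mul_pos hb hd) hy0]
  have h1 : 0 ≤ u^2*(x+y+1)*(x+y)^2 :=
    mul_nonneg (mul_nonneg (sq_nonneg u) (by linarith)) (sq_nonneg (x+y))
  have h2 : 0 ≤ u*w*(x+y) * (a*(x*x) + 2*(a*(x*y)) + c*(x*x) + 2*(d*(x*y)) + d*(y*y) + b*(y*y)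
      + a*x + c*x + b*y + d*y) :=
    mul_nonneg (mul_nonneg (mul_nonneg hu hw.le) (by linarith)) hP1.le
  have h3 : 0 < w^2*(x+y) * (a*c*(x*x) + 2*(a*d*(x*y)) + b*d*(y*y) + a*c*x + b*d*y) :=
    mul_pos (mul_pos (by positivity) (by linarith : (0:ℝ) < x + y)) hP2
  have hT : (x+1) * (y+1) * (u*(x+y) + w*(a*x+b*y)) * (u*(x+y) + w*(c*x+d*y))
      - x * y * (u*(x+y) + w*(a*(x-1)+b*(y+1))) * (u*(x+y) + w*(c*(x+1)+d*(y-1)))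
      = u^2*(x+y+1)*(x+y)^2
        + u*w*(x+y) * (a*(x*x) + 2*(a*(x*y)) + c*(x*x) + 2*(d*(x*y)) + d*(y*y) + b*(y*y)
            + a*x + c*x + b*y + d*y)
        + w^2*(x+y) * (a*c*(x*x) + 2*(a*d*(x*y)) + b*d*(y*y) + a*c*x + b*d*y) := by
    ring
  linarith

lemma frac_mono (X Y X' Y' : ℝ) (hX : 0 < X) (hY : 0 < Y) (hX' : 0 < X') (hY' : 0 < Y')
    (h : X * Y' < X' * Y) : X / (X + Y) < X' / (X' + Y') := by
  rw [div_lt_div_iff₀ (by linarith) (by linarith)]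
  nlinarith

theorem stmt_8 (a b c d w : ℝ) (hc0 : 0 < c) (hca : c < a) (hd0 : 0 < d) (hdb : d < b)
    (hw0 : 0 < w) (hw1 : w ≤ 1) :
    ∃ N₁ : ℕ, 2 ≤ N₁ ∧ ∀ N : ℕ, N₁ ≤ N →
      (∀ i : ℕ, 1 ≤ i → i ≤ N - 1 → 0 < gN c d w N i ∧ gN c d w N i < fN a b w N i) ∧
      ∀ i : ℕ, 1 ≤ i → i ≤ N - 2 → xiN a b c d w N i < xiN a b c d w N (i + 1) := by
  have hm : 0 < min (a - c) (b - d) := lt_min (by linarith) (by linarith)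
  set m : ℝ := min (a - c) (b - d) with hm_def
  refine ⟨max 2 (⌈(a-d)/m⌉₊ + 2), le_max_left _ _, ?_⟩
  intro N hN
  have hN2 : 2 ≤ N := le_trans (le_max_left _ _) hN
  have hNr : (2:ℝ) ≤ (N:ℝ) := by exact_mod_cast hN2
  have hs : (0:ℝ) < (N:ℝ) - 1 := by linarith
  have hmN : a - d < m * (N:ℝ) := by
    have h1 : (⌈(a-d)/m⌉₊ + 2 : ℕ) ≤ N := le_trans (le_max_right _ _) hN
    have h2 : ((⌈(a-d)/m⌉₊ : ℝ) + 2) ≤ (N:ℝ) := by exact_mod_cast h1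
    have h3 : (a-d)/m ≤ (⌈(a-d)/m⌉₊ : ℝ) := Nat.le_ceil _
    have h4 : (a-d)/m + 2 ≤ (N:ℝ) := by linarith
    have h5 : m * ((a-d)/m) = a - d := by field_simp
    nlinarith
  have hpart1 : ∀ i : ℕ, 1 ≤ i → i ≤ N - 1 →
      0 < gN c d w N i ∧ gN c d w N i < fN a b w N i := by
    intro i hi1 hi2
    have hx1 : (1:ℝ) ≤ (i:ℝ) := by exact_mod_cast hi1
    have hiN' : i + 1 ≤ N := by omega
    have hiN : (i:ℝ) ≤ (N:ℝ) - 1 := by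
      have : ((i:ℝ) + 1) ≤ (N:ℝ) := by exact_mod_cast hiN'
      linarith
    have hg : 0 < gN c d w N i := by
      unfold gN
      have hnum : 0 < c * (i:ℝ) + d * ((N:ℝ) - (i:ℝ) - 1) := by
        nlinarith [mul_le_mul_of_nonneg_left hx1 hc0.le,
          mul_nonneg hd0.le (show (0:ℝ) ≤ (N:ℝ) - (i:ℝ) - 1 by linarith)]
      have := div_pos (mul_pos hw0 hnum) hs
      linarith
    refine ⟨hg, ?_⟩
    have hnum : 0 < (a-c)*(i:ℝ) + (b-d)*((N:ℝ)-(i:ℝ)) - a + d := by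
      have h1 : m ≤ a - c := min_le_left _ _
      have h2 : m ≤ b - d := min_le_right _ _
      nlinarith [mul_le_mul_of_nonneg_right h1 (by linarith : (0:ℝ) ≤ (i:ℝ)),
        mul_le_mul_of_nonneg_right h2 (by linarith : (0:ℝ) ≤ (N:ℝ) - (i:ℝ))]
    have hdiff : fN a b w N i - gN c d w N i
        = w * ((a-c)*(i:ℝ) + (b-d)*((N:ℝ)-(i:ℝ)) - a + d) / ((N:ℝ) - 1) := by
      unfold fN gN
      field_simp
      ring
    have hpos := div_pos (mul_pos hw0 hnum) hs
    linarith
  refine ⟨hpart1, ?_⟩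
  intro i hi1 hi2
  have hiN' : i + 2 ≤ N := by omega
  have hx1 : (1:ℝ) ≤ (i:ℝ) := by exact_mod_cast hi1
  have hxN : (i:ℝ) + 2 ≤ (N:ℝ) := by exact_mod_cast hiN'
  have hy1 : (1:ℝ) ≤ (N:ℝ) - (i:ℝ) - 1 := by linarith
  obtain ⟨hg1, hfg1⟩ := hpart1 i hi1 (by omega)
  obtain ⟨hg2, hfg2⟩ := hpart1 (i+1) (by omega) (by omega)
  have hf1 : 0 < fN a b w N i := lt_trans hg1 hfg1
  have hf2 : 0 < fN a b w N (i+1) := lt_trans hg2 hfg2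
  have hkey := key_ineq a b c d (1-w) w (i:ℝ) ((N:ℝ) - (i:ℝ) - 1)
    (by linarith) hw0 (by linarith) (by linarith) hc0 hd0 hx1 hy1
  have E1 : ((N:ℝ)-1) * fN a b w N i
      = (1-w)*((N:ℝ)-1) + w*(a*((i:ℝ)-1)+b*((N:ℝ)-(i:ℝ))) := by
    unfold fN; rw [mul_add, mul_div_cancel₀ _ hs.ne']; ring
  have E2 : ((N:ℝ)-1) * fN a b w N (i+1)
      = (1-w)*((N:ℝ)-1) + w*(a*(i:ℝ)+b*((N:ℝ)-(i:ℝ)-1)) := by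
    unfold fN; push_cast; rw [mul_add, mul_div_cancel₀ _ hs.ne']; ring
  have E3 : ((N:ℝ)-1) * gN c d w N i
      = (1-w)*((N:ℝ)-1) + w*(c*(i:ℝ)+d*((N:ℝ)-(i:ℝ)-1)) := by
    unfold gN; rw [mul_add, mul_div_cancel₀ _ hs.ne']; ring
  have E4 : ((N:ℝ)-1) * gN c d w N (i+1)
      = (1-w)*((N:ℝ)-1) + w*(c*((i:ℝ)+1)+d*((N:ℝ)-(i:ℝ)-2)) := by
    unfold gN; push_cast; rw [mul_add, mul_div_cancel₀ _ hs.ne']; ring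
  have hcross : (i:ℝ) * fN a b w N i * (((N:ℝ)-((i:ℝ)+1)) * gN c d w N (i+1))
      < ((i:ℝ)+1) * fN a b w N (i+1) * (((N:ℝ)-(i:ℝ)) * gN c d w N i) := by
    refine lt_of_mul_lt_mul_left ?_ (mul_pos hs hs).le
    calc ((N:ℝ)-1)*((N:ℝ)-1) * ((i:ℝ) * fN a b w N i * (((N:ℝ)-((i:ℝ)+1)) * gN c d w N (i+1)))
        = (i:ℝ) * ((N:ℝ)-(i:ℝ)-1) * (((N:ℝ)-1) * fN a b w N i)
            * (((N:ℝ)-1) * gN c d w N (i+1)) := by ring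
      _ = (i:ℝ) * ((N:ℝ)-(i:ℝ)-1) * ((1-w)*((N:ℝ)-1) + w*(a*((i:ℝ)-1)+b*((N:ℝ)-(i:ℝ))))
            * ((1-w)*((N:ℝ)-1) + w*(c*((i:ℝ)+1)+d*((N:ℝ)-(i:ℝ)-2))) := by rw [E1, E4]
      _ < ((i:ℝ)+1) * (((N:ℝ)-(i:ℝ)-1)+1)
            * ((1-w)*((N:ℝ)-1) + w*(a*(i:ℝ)+b*((N:ℝ)-(i:ℝ)-1)))
            * ((1-w)*((N:ℝ)-1) + w*(c*(i:ℝ)+d*((N:ℝ)-(i:ℝ)-1))) := by linarith [hkey]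
      _ = ((i:ℝ)+1) * (((N:ℝ)-(i:ℝ)-1)+1) * (((N:ℝ)-1) * fN a b w N (i+1))
            * (((N:ℝ)-1) * gN c d w N i) := by rw [E2, E3]
      _ = ((N:ℝ)-1)*((N:ℝ)-1) * (((i:ℝ)+1) * fN a b w N (i+1)
            * (((N:ℝ)-(i:ℝ)) * gN c d w N i)) := by ring
  have hcast : ((i+1 : ℕ) : ℝ) = (i:ℝ) + 1 := by push_cast; ring
  unfold xiN
  rw [hcast]
  exact frac_mono _ _ _ _ (mul_pos (by linarith) hf1)
    (mul_pos (by linarith : (0:ℝ) < (N:ℝ) - (i:ℝ)) hg1)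
    (mul_pos (by linarith) hf2)
    (mul_pos (by linarith : (0:ℝ) < (N:ℝ) - ((i:ℝ)+1)) hg2)
    hcross
end

section
/- Fix constants a > c > 0, b > d > 0 and w ∈ (0,1], and let f_N, g_N be the fitness functions of the Imhof-Nowak Wright-Fisher model. Then for all N large enough and all 1 ≤ i ≤ N-2, (g_N(i+1)/g_N(i)) · (f_N(i)/f_N(i+1)) < ((i+1)/i) · ((N-i)/(N-i-1)). -/
theorem stmt_9 (a b c d w : ℝ) (hc0 : 0 < c) (hca : c < a) (hd0 : 0 < d) (hdb : d < b)
    (hw0 : 0 < w) (hw1 : w ≤ 1) :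
    ∃ N₀ : ℕ, 2 ≤ N₀ ∧ ∀ N : ℕ, N₀ ≤ N → ∀ i : ℕ, 1 ≤ i → i ≤ N - 2 →
      gN c d w N (i + 1) / gN c d w N i * (fN a b w N i / fN a b w N (i + 1)) <
        (((i : ℝ) + 1) / (i : ℝ)) * (((N : ℝ) - (i : ℝ)) / ((N : ℝ) - (i : ℝ) - 1)) := by
  refine ⟨3, by norm_num, fun N hN i hi1 hi2 => ?_⟩
  have hiN : i + 2 ≤ N := by omega
  have hx1 : (1 : ℝ) ≤ (i : ℝ) := by exact_mod_cast hi1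
  have hxN : (i : ℝ) + 2 ≤ (N : ℝ) := by exact_mod_cast hiN
  set n : ℝ := (N : ℝ) with hn
  set x : ℝ := (i : ℝ) with hx
  have ha0 : 0 < a := hc0.trans hca
  have hb0 : 0 < b := hd0.trans hdb
  have hw' : 0 ≤ 1 - w := by linarith
  have hD : 0 < n - 1 := by linarith
  have hne : n - 1 ≠ 0 := ne_of_gt hD
  have hcast : ((i + 1 : ℕ) : ℝ) = x + 1 := by push_cast; rfl
  -- unfold and rewrite the four fitness values
  have hgi : gN c d w N i = 1 - w + w * (c * x + d * (n - x - 1)) / (n - 1) := rfl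
  have hgi' : gN c d w N (i + 1)
      = 1 - w + w * (c * (x + 1) + d * (n - (x + 1) - 1)) / (n - 1) := by
    rw [gN, hcast]
  have hfi : fN a b w N i = 1 - w + w * (a * (x - 1) + b * (n - x)) / (n - 1) := rfl
  have hfi' : fN a b w N (i + 1)
      = 1 - w + w * (a * ((x + 1) - 1) + b * (n - (x + 1))) / (n - 1) := by
    rw [fN, hcast]
  -- positivity of all four fitness values
  have hx0 : 0 < x := by linarith
  have hk0 : 0 < n - x - 1 := by linarith
  have hG : 0 < gN c d w N i := by
    rw [hgi]
    have h1 : 0 < c * x + d * (n - x - 1) := by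
      have := mul_pos hc0 hx0; have := mul_pos hd0 hk0; linarith
    have h2 := div_pos (mul_pos hw0 h1) hD
    linarith
  have hG' : 0 < gN c d w N (i + 1) := by
    rw [hgi']
    have h1 : 0 < c * (x + 1) + d * (n - (x + 1) - 1) := by
      have := mul_pos hc0 (by linarith : (0:ℝ) < x + 1)
      have := mul_nonneg hd0.le (by linarith : (0:ℝ) ≤ n - (x + 1) - 1)
      linarith
    have h2 := div_pos (mul_pos hw0 h1) hD
    linarith
  have hF : 0 < fN a b w N i := by
    rw [hfi]
    have h0 := mul_nonneg ha0.le (by linarith : (0:ℝ) ≤ x - 1)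
    have h1 : 0 < a * (x - 1) + b * (n - x) := by
      have := mul_pos hb0 (by linarith : (0:ℝ) < n - x); linarith
    have h2 := div_pos (mul_pos hw0 h1) hD
    linarith
  have hF' : 0 < fN a b w N (i + 1) := by
    rw [hfi']
    have h1 : 0 < a * ((x + 1) - 1) + b * (n - (x + 1)) := by
      have := mul_pos ha0 hx0
      have := mul_pos hb0 (by linarith : (0:ℝ) < n - (x + 1)); linarith
    have h2 := div_pos (mul_pos hw0 h1) hD
    linarith
  -- key inequalities
  have key1 : x * gN c d w N (i + 1) < (x + 1) * gN c d w N i := by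
    rw [hgi, hgi']
    have h : (x + 1) * (1 - w + w * (c * x + d * (n - x - 1)) / (n - 1))
        - x * (1 - w + w * (c * (x + 1) + d * (n - (x + 1) - 1)) / (n - 1))
        = 1 - w + w * d := by
      field_simp [hne]
      ring
    linarith [mul_pos hw0 hd0]
  have key2 : (n - x - 1) * fN a b w N i < (n - x) * fN a b w N (i + 1) := by
    rw [hfi, hfi']
    have h : (n - x) * (1 - w + w * (a * ((x + 1) - 1) + b * (n - (x + 1))) / (n - 1))
        - (n - x - 1) * (1 - w + w * (a * (x - 1) + b * (n - x)) / (n - 1))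
        = 1 - w + w * a := by
      field_simp [hne]
      ring
    linarith [mul_pos hw0 ha0]
  have key : (x * gN c d w N (i + 1)) * ((n - x - 1) * fN a b w N i)
      < ((x + 1) * gN c d w N i) * ((n - x) * fN a b w N (i + 1)) :=
    mul_lt_mul'' key1 key2 (mul_pos hx0 hG').le (mul_pos hk0 hF).le
  rw [div_mul_div_comm, div_mul_div_comm, div_lt_div_iff₀ (mul_pos hG hF') (mul_pos hx0 hk0)]
  nlinarith [key]
end
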